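/- arXiv:2407.15997 — 7 statements merged into one kernel-verified Lean document; each statement's English description precedes it below -/
import Mathlib

section
/- Let Ω ⊆ ℂ^d be open and let 𝒳 be a Hausdorff topological vector space of holomorphic functions on Ω satisfying (P1)–(P3). If S = (S_1,…,S_d) is the d-tuple of shift operators on 𝒳, then Ω ⊆ Ω_max ⊆ σ_R(S), where σ_R(S) is the right Harte spectrum of S. -/
/-!
A Hausdorff topological vector space `X` of holomorphic functions on an open set
`Ω ⊆ ℂ^d` satisfying (P1) (polynomials are dense), (P2) (point evaluations at points
of `Ω` are continuous) and (P3) (the shift operators, and hence multiplication by any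
polynomial, are continuous linear self maps).
-/
structure HoloFunSpace (d : ℕ) (Ω : Set (Fin d → ℂ)) (X : Type*)
    [AddCommGroup X] [Module ℂ X] [TopologicalSpace X] where
  /-- The realization of elements of `X` as (holomorphic) functions on `Ω`. -/
  toFun : X →ₗ[ℂ] ((Fin d → ℂ) → ℂ)
  holo : ∀ F : X, DifferentiableOn ℂ (toFun F) Ω
  inj : ∀ F G : X, Set.EqOn (toFun F) (toFun G) Ω → F = G
  /-- The polynomials, as elements of `X`. -/
  poly : MvPolynomial (Fin d) ℂ →ₗ[ℂ] X
  poly_eval : ∀ (P : MvPolynomial (Fin d) ℂ), ∀ z ∈ Ω,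
    toFun (poly P) z = MvPolynomial.eval z P
  /-- (P1): polynomials are dense in `X`. -/
  dense_poly : Dense (Set.range fun P : MvPolynomial (Fin d) ℂ => poly P)
  /-- (P2): point evaluations at points of `Ω` are continuous. -/
  eval_cont : ∀ z ∈ Ω, Continuous fun F : X => toFun F z
  /-- Multiplication by a polynomial, a continuous linear self map of `X`;
  (P3) is the special case of the shifts `mul (X j)`. -/
  mul : MvPolynomial (Fin d) ℂ → X →L[ℂ] X
  mul_eval : ∀ (P : MvPolynomial (Fin d) ℂ) (F : X), ∀ z ∈ Ω,
    toFun (mul P F) z = MvPolynomial.eval z P * toFun F z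

namespace HoloFunSpace

variable {d : ℕ} {Ω : Set (Fin d → ℂ)} {X : Type*}
  [AddCommGroup X] [Module ℂ X] [TopologicalSpace X]

/-- The maximal domain `Ω_max`: all `w ∈ ℂ^d` such that evaluation at `w`, defined on
polynomials, extends to a continuous linear functional on `X`. -/
def maxDomain (H : HoloFunSpace d Ω X) : Set (Fin d → ℂ) :=
  {w | ∃ Λ : X →L[ℂ] ℂ, ∀ P : MvPolynomial (Fin d) ℂ, Λ (H.poly P) = MvPolynomial.eval w P}

end HoloFunSpace

/-!
Point evaluation at `w ∈ Ω_max` is a continuous functional `Λ ≠ 0` (it sends `1` to `1`). It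
annihilates the range of every `S_j - w_j`: on polynomials `Λ((z_j - w_j) P) = (w_j - w_j) P(w) = 0`,
and polynomials are dense. Applying `Λ` to `∑ (S_j - w_j) A_j = I` then gives `Λ = 0`.
-/

theorem ContinuousLinearMap.sum_comp_ne_id_of_comp_eq_zero {R M N ι : Type*} [Semiring R]
    [TopologicalSpace M] [AddCommMonoid M] [Module R M] [ContinuousAdd M]
    [TopologicalSpace N] [AddCommMonoid N] [Module R N] [ContinuousAdd N]
    {Λ : M →L[R] N} (hΛ : Λ ≠ 0) {s : Finset ι} {T : ι → M →L[R] M}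
    (hT : ∀ j ∈ s, Λ.comp (T j) = 0) (A : ι → M →L[R] M) :
    ∑ j ∈ s, (T j).comp (A j) ≠ ContinuousLinearMap.id R M := by
  intro h
  apply hΛ
  calc Λ = Λ.comp (∑ j ∈ s, (T j).comp (A j)) := by rw [h, comp_id]
    _ = ∑ j ∈ s, (Λ.comp (T j)).comp (A j) := by rw [comp_finsetSum]; rfl
    _ = 0 := Finset.sum_eq_zero fun j hj => by rw [hT j hj, zero_comp]

namespace HoloFunSpace

variable {d : ℕ} {Ω : Set (Fin d → ℂ)} {X : Type*}
  [AddCommGroup X] [Module ℂ X] [TopologicalSpace X] (H : HoloFunSpace d Ω X)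

def evalCLM {w : Fin d → ℂ} (hw : w ∈ Ω) : X →L[ℂ] ℂ :=
  ⟨(LinearMap.proj w).comp H.toFun, H.eval_cont w hw⟩

theorem subset_maxDomain : Ω ⊆ H.maxDomain :=
  fun _ hw => ⟨H.evalCLM hw, fun P => H.poly_eval P _ hw⟩

theorem mul_poly (Q P : MvPolynomial (Fin d) ℂ) : H.mul Q (H.poly P) = H.poly (Q * P) :=
  H.inj _ _ fun z hz => by simp [H.mul_eval _ _ z hz, H.poly_eval _ z hz]

variable {H} {w : Fin d → ℂ} {Λ : X →L[ℂ] ℂ}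

theorem ne_zero_of_eq_eval
    (hΛ : ∀ P : MvPolynomial (Fin d) ℂ, Λ (H.poly P) = MvPolynomial.eval w P) :
    Λ ≠ 0 :=
  fun h => by simpa [h] using hΛ 1

theorem comp_shift_sub_eq_zero [IsTopologicalAddGroup X] [ContinuousSMul ℂ X]
    (hΛ : ∀ P : MvPolynomial (Fin d) ℂ, Λ (H.poly P) = MvPolynomial.eval w P) (j : Fin d) :
    Λ.comp (H.mul (MvPolynomial.X j) - w j • ContinuousLinearMap.id ℂ X) = 0 := by
  refine ContinuousLinearMap.ext_on (H.dense_poly.mono Submodule.subset_span) ?_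
  rintro _ ⟨P, rfl⟩
  simp [mul_poly, hΛ]

end HoloFunSpace

open HoloFunSpace in
theorem maxDomain_subset_rightHarteSpectrum_general
    {d : ℕ} {Ω : Set (Fin d → ℂ)} {X : Type*}
    [AddCommGroup X] [Module ℂ X] [TopologicalSpace X]
    [IsTopologicalAddGroup X] [ContinuousSMul ℂ X]
    (H : HoloFunSpace d Ω X) :
    Ω ⊆ H.maxDomain ∧
      ∀ w ∈ H.maxDomain,
        ¬ ∃ A : Fin d → (X →L[ℂ] X),
            (∑ j, (H.mul (MvPolynomial.X j) - w j • ContinuousLinearMap.id ℂ X).comp (A j))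
              = ContinuousLinearMap.id ℂ X :=
  ⟨H.subset_maxDomain, fun _ ⟨_, hΛ⟩ ⟨A, hA⟩ =>
    ContinuousLinearMap.sum_comp_ne_id_of_comp_eq_zero (ne_zero_of_eq_eval hΛ)
      (fun j _ => comp_shift_sub_eq_zero hΛ j) A hA⟩

open HoloFunSpace in
/-- `Ω ⊆ Ω_max ⊆ σ_R(S)`, i.e. `Ω ⊆ Ω_max` and no point of `Ω_max`
belongs to the right Harte resolvent set of the tuple of shifts `S = (S_1, …, S_d)`. -/
theorem maxDomain_subset_rightHarteSpectrum
    {d : ℕ} {Ω : Set (Fin d → ℂ)} {X : Type*}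
    [AddCommGroup X] [Module ℂ X] [TopologicalSpace X]
    [IsTopologicalAddGroup X] [ContinuousSMul ℂ X] [T2Space X]
    (hΩ : IsOpen Ω) (H : HoloFunSpace d Ω X) :
    Ω ⊆ H.maxDomain ∧
      ∀ w ∈ H.maxDomain,
        ¬ ∃ A : Fin d → (X →L[ℂ] X),
            (∑ j, (H.mul (MvPolynomial.X j) - w j • ContinuousLinearMap.id ℂ X).comp (A j))
              = ContinuousLinearMap.id ℂ X :=
  maxDomain_subset_rightHarteSpectrum_general H
end

section
/- Let Ω ⊆ ℂ^d be open and let 𝒳 be a Hausdorff topological vector space of holomorphic functions on Ω satisfying (P1)–(P3). Then Ω_max ⊆ Ω_env, i.e., if w ∈ Ω_max then every cyclic polynomial P satisfies P(w) ≠ 0. -/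
namespace HoloFunSpace

variable {d : ℕ} {Ω : Set (Fin d → ℂ)} {X : Type*}
  [AddCommGroup X] [Module ℂ X] [TopologicalSpace X]

/-- The invariant subspace `S[F]`: the closure of `{P · F : P ∈ 𝒫_d}`. -/
def invSub (H : HoloFunSpace d Ω X) (F : X) : Set X :=
  closure (Set.range fun P : MvPolynomial (Fin d) ℂ => H.mul P F)

/-- `F` is cyclic if `S[F] = X`. -/
def Cyclic (H : HoloFunSpace d Ω X) (F : X) : Prop := H.invSub F = Set.univ

/-- The joint invariant subspace `S[𝓕]`: the closed linear span of `⋃_{F ∈ 𝓕} S[F]`. -/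
def jointInvSub (H : HoloFunSpace d Ω X) (𝓕 : Set X) : Set X :=
  closure (Submodule.span ℂ (⋃ F ∈ 𝓕, H.invSub F) : Set X)

/-- A family `𝓕` is jointly cyclic if `S[𝓕] = X`. -/
def JointlyCyclic (H : HoloFunSpace d Ω X) (𝓕 : Set X) : Prop :=
  H.jointInvSub 𝓕 = Set.univ

end HoloFunSpace

/-!
A continuous extension `Λ` of evaluation at `w` sends `Q · P` to `Q(w) P(w)`, so if
`P(w) = 0` it vanishes on `{Q · P}` and hence on its closure `S[P]`. If `P` is cyclic, this
closure contains the constant polynomial `1`, and `Λ 1 = 1`.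
-/

namespace HoloFunSpace

variable {d : ℕ} {Ω : Set (Fin d → ℂ)} {X : Type*}
  [AddCommGroup X] [Module ℂ X] [TopologicalSpace X]

theorem poly_mul (H : HoloFunSpace d Ω X) (Q P : MvPolynomial (Fin d) ℂ) :
    H.poly (Q * P) = H.mul Q (H.poly P) :=
  H.inj _ _ fun z hz => by
    rw [H.poly_eval _ z hz, H.mul_eval _ _ z hz, H.poly_eval _ z hz, MvPolynomial.eval_mul]

theorem Cyclic.eq_zero_of_forall_mul_eq_zero {H : HoloFunSpace d Ω X} {F : X}
    (hF : H.Cyclic F) (Λ : X →L[ℂ] ℂ) (hΛ : ∀ Q, Λ (H.mul Q F) = 0) (G : X) : Λ G = 0 := by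
  have hker : H.invSub F ⊆ Λ ⁻¹' {0} :=
    (isClosed_singleton.preimage Λ.continuous).closure_subset_iff.mpr <| by
      rintro _ ⟨Q, rfl⟩
      exact hΛ Q
  exact hker (hF ▸ Set.mem_univ G)

end HoloFunSpace

open HoloFunSpace in
theorem maxDomain_subset_envDomain_general
    {d : ℕ} {Ω : Set (Fin d → ℂ)} {X : Type*}
    [AddCommGroup X] [Module ℂ X] [TopologicalSpace X]
    (H : HoloFunSpace d Ω X) :
    ∀ w ∈ H.maxDomain, ∀ P : MvPolynomial (Fin d) ℂ,
      H.Cyclic (H.poly P) → MvPolynomial.eval w P ≠ 0 := by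
  rintro w ⟨Λ, hΛ⟩ P hcyc hPw
  have hΛ_one : Λ (H.poly 1) = 0 :=
    hcyc.eq_zero_of_forall_mul_eq_zero Λ
      (fun Q => by rw [← H.poly_mul, hΛ, MvPolynomial.eval_mul, hPw, mul_zero]) _
  rw [hΛ, map_one] at hΛ_one
  exact one_ne_zero hΛ_one

open HoloFunSpace in
/-- `Ω_max ⊆ Ω_env`: if `w ∈ Ω_max` then every cyclic polynomial `P`
satisfies `P(w) ≠ 0`. -/
theorem maxDomain_subset_envDomain
    {d : ℕ} {Ω : Set (Fin d → ℂ)} {X : Type*}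
    [AddCommGroup X] [Module ℂ X] [TopologicalSpace X]
    [IsTopologicalAddGroup X] [ContinuousSMul ℂ X] [T2Space X]
    (hΩ : IsOpen Ω) (H : HoloFunSpace d Ω X) :
    ∀ w ∈ H.maxDomain, ∀ P : MvPolynomial (Fin d) ℂ,
      H.Cyclic (H.poly P) → MvPolynomial.eval w P ≠ 0 :=
  maxDomain_subset_envDomain_general H
end

section
/- Let Ω ⊆ ℂ^d be open and let 𝒳 be a Hausdorff topological vector space of holomorphic functions on Ω satisfying (P1)–(P3). For a polynomial P ∈ 𝒫_d and F ∈ 𝒳, the product PF is cyclic in 𝒳 if and only if both P and F are cyclic in 𝒳. -/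
/-!
Multiplication by polynomials is continuous and commutative, so `G ∈ S[F]` implies
`S[G] ⊆ S[F]` and `A G ∈ S[A F]`. The constant `1` is cyclic by density of polynomials, so
`P F ∈ S[P · 1] = S[P]`; together with `P F ∈ S[F]` this passes cyclicity of `P F` to `P`
and `F`. Conversely, if `F` is cyclic then `P = P · 1 ∈ S[P F]`, so `S[P] ⊆ S[P F]`.
-/

namespace HoloFunSpace

variable {d : ℕ} {Ω : Set (Fin d → ℂ)} {X : Type*}
  [AddCommGroup X] [Module ℂ X] [TopologicalSpace X] (H : HoloFunSpace d Ω X)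

theorem mul_mul (A B : MvPolynomial (Fin d) ℂ) (G : X) :
    H.mul A (H.mul B G) = H.mul (A * B) G :=
  H.inj _ _ fun z hz => by
    rw [H.mul_eval _ _ z hz, H.mul_eval _ _ z hz, H.mul_eval _ _ z hz, map_mul, mul_assoc]

theorem mul_mul_comm (A B : MvPolynomial (Fin d) ℂ) (G : X) :
    H.mul A (H.mul B G) = H.mul B (H.mul A G) := by
  rw [mul_mul, mul_mul, mul_comm]

theorem mul_poly_one (A : MvPolynomial (Fin d) ℂ) : H.mul A (H.poly 1) = H.poly A :=
  H.inj _ _ fun z hz => by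
    rw [H.mul_eval _ _ z hz, H.poly_eval _ z hz, H.poly_eval _ z hz, map_one, mul_one]

theorem mul_mem_invSub (A : MvPolynomial (Fin d) ℂ) (F : X) : H.mul A F ∈ H.invSub F :=
  subset_closure ⟨A, rfl⟩

theorem mul_mem_invSub_mul {A : MvPolynomial (Fin d) ℂ} {F G : X} (hG : G ∈ H.invSub F) :
    H.mul A G ∈ H.invSub (H.mul A F) := by
  refine closure_mono ?_ (image_closure_subset_closure_image (H.mul A).continuous ⟨G, hG, rfl⟩)
  rintro _ ⟨_, ⟨Q, rfl⟩, rfl⟩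
  exact ⟨Q, H.mul_mul_comm Q A F⟩

theorem mul_mem_invSub_of_mem {A : MvPolynomial (Fin d) ℂ} {F G : X} (hG : G ∈ H.invSub F) :
    H.mul A G ∈ H.invSub F := by
  refine closure_mono ?_ (image_closure_subset_closure_image (H.mul A).continuous ⟨G, hG, rfl⟩)
  rintro _ ⟨_, ⟨Q, rfl⟩, rfl⟩
  exact ⟨A * Q, (H.mul_mul A Q F).symm⟩

theorem invSub_subset_of_mem {F G : X} (hG : G ∈ H.invSub F) : H.invSub G ⊆ H.invSub F :=
  closure_minimal (Set.range_subset_iff.2 fun _ => H.mul_mem_invSub_of_mem hG) isClosed_closure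

variable {H}

theorem Cyclic.of_mem_invSub {F G : X} (hG : H.Cyclic G) (hGF : G ∈ H.invSub F) :
    H.Cyclic F :=
  Set.eq_univ_of_univ_subset (hG ▸ H.invSub_subset_of_mem hGF)

theorem Cyclic.mem_invSub {F : X} (hF : H.Cyclic F) (G : X) : G ∈ H.invSub F :=
  hF ▸ Set.mem_univ G

variable (H) in
theorem cyclic_poly_one : H.Cyclic (H.poly 1) :=
  Set.eq_univ_of_univ_subset <| H.dense_poly.closure_eq ▸
    closure_mono (Set.range_subset_iff.2 fun A => ⟨A, H.mul_poly_one A⟩)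

end HoloFunSpace

open HoloFunSpace in
theorem cyclic_mul_iff_general
    {d : ℕ} {Ω : Set (Fin d → ℂ)} {X : Type*}
    [AddCommGroup X] [Module ℂ X] [TopologicalSpace X]
    (H : HoloFunSpace d Ω X)
    (P : MvPolynomial (Fin d) ℂ) (F : X) :
    H.Cyclic (H.mul P F) ↔ (H.Cyclic (H.poly P) ∧ H.Cyclic F) := by
  constructor
  · intro hPF
    have hmem_poly : H.mul P F ∈ H.invSub (H.poly P) :=
      H.mul_poly_one P ▸ H.mul_mem_invSub_mul (H.cyclic_poly_one.mem_invSub F)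
    exact ⟨hPF.of_mem_invSub hmem_poly, hPF.of_mem_invSub (H.mul_mem_invSub P F)⟩
  · rintro ⟨hP, hF⟩
    have hmem : H.poly P ∈ H.invSub (H.mul P F) :=
      H.mul_poly_one P ▸ H.mul_mem_invSub_mul (hF.mem_invSub _)
    exact hP.of_mem_invSub hmem

open HoloFunSpace in
/-- For a polynomial `P` and `F ∈ X`, the product `P · F` is cyclic
if and only if both `P` and `F` are cyclic. -/
theorem cyclic_mul_iff
    {d : ℕ} {Ω : Set (Fin d → ℂ)} {X : Type*}
    [AddCommGroup X] [Module ℂ X] [TopologicalSpace X]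
    [IsTopologicalAddGroup X] [ContinuousSMul ℂ X] [T2Space X]
    (hΩ : IsOpen Ω) (H : HoloFunSpace d Ω X)
    (P : MvPolynomial (Fin d) ℂ) (F : X) :
    H.Cyclic (H.mul P F) ↔ (H.Cyclic (H.poly P) ∧ H.Cyclic F) :=
  cyclic_mul_iff_general H P F
end

section
/- Let Ω ⊆ ℂ be open (one complex variable) and let 𝒳 be a Hausdorff topological vector space of holomorphic functions on Ω satisfying (P1)–(P3). Then Ω_max = {w ∈ ℂ : the polynomial z − w is not cyclic in 𝒳} = Ω_env. -/
/-!
A Hausdorff topological vector space `X` of holomorphic functions in one complex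
variable on an open set `Ω ⊆ ℂ` satisfying (P1) (polynomials are dense), (P2) (point
evaluations at points of `Ω` are continuous) and (P3) (the shift operator, and hence
multiplication by any polynomial, is a continuous linear self map).
-/
structure HoloFunSpace1 (Ω : Set ℂ) (X : Type*)
    [AddCommGroup X] [Module ℂ X] [TopologicalSpace X] where
  /-- The realization of elements of `X` as (holomorphic) functions on `Ω`. -/
  toFun : X →ₗ[ℂ] (ℂ → ℂ)
  holo : ∀ F : X, DifferentiableOn ℂ (toFun F) Ω
  inj : ∀ F G : X, Set.EqOn (toFun F) (toFun G) Ω → F = G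
  /-- The polynomials, as elements of `X`. -/
  poly : Polynomial ℂ →ₗ[ℂ] X
  poly_eval : ∀ (p : Polynomial ℂ), ∀ z ∈ Ω, toFun (poly p) z = Polynomial.eval z p
  /-- (P1): polynomials are dense in `X`. -/
  dense_poly : Dense (Set.range fun p : Polynomial ℂ => poly p)
  /-- (P2): point evaluations at points of `Ω` are continuous. -/
  eval_cont : ∀ z ∈ Ω, Continuous fun F : X => toFun F z
  /-- Multiplication by a polynomial, a continuous linear self map of `X`;
  (P3) is the special case of the shift `mul X`. -/
  mul : Polynomial ℂ → X →L[ℂ] X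
  mul_eval : ∀ (p : Polynomial ℂ) (F : X), ∀ z ∈ Ω,
    toFun (mul p F) z = Polynomial.eval z p * toFun F z

namespace HoloFunSpace1

variable {Ω : Set ℂ} {X : Type*} [AddCommGroup X] [Module ℂ X] [TopologicalSpace X]

/-- The maximal domain `Ω_max`: all `w ∈ ℂ` such that evaluation at `w`, defined on
polynomials, extends to a continuous linear functional on `X`. -/
def maxDomain (H : HoloFunSpace1 Ω X) : Set ℂ :=
  {w | ∃ Λ : X →L[ℂ] ℂ, ∀ p : Polynomial ℂ, Λ (H.poly p) = Polynomial.eval w p}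

/-- The invariant subspace `S[F]`: the closure of `{p · F : p ∈ 𝒫_1}`. -/
def invSub (H : HoloFunSpace1 Ω X) (F : X) : Set X :=
  closure (Set.range fun p : Polynomial ℂ => H.mul p F)

/-- `F` is cyclic if `S[F] = X`. -/
def Cyclic (H : HoloFunSpace1 Ω X) (F : X) : Prop := H.invSub F = Set.univ

/-- The joint invariant subspace `S[𝓕]`: the closed linear span of `⋃_{F ∈ 𝓕} S[F]`. -/
def jointInvSub (H : HoloFunSpace1 Ω X) (𝓕 : Set X) : Set X :=
  closure (Submodule.span ℂ (⋃ F ∈ 𝓕, H.invSub F) : Set X)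

/-- A family `𝓕` is jointly cyclic if `S[𝓕] = X`. -/
def JointlyCyclic (H : HoloFunSpace1 Ω X) (𝓕 : Set X) : Prop :=
  H.jointInvSub 𝓕 = Set.univ

end HoloFunSpace1

section DenseExtension

variable {𝕜 : Type*} [NontriviallyNormedField 𝕜] [CompleteSpace 𝕜]

theorem exists_continuousLinearMap_apply_eq_one_of_dense_span_singleton
    {Q : Type*} [AddCommGroup Q] [Module 𝕜 Q] [TopologicalSpace Q] [IsTopologicalAddGroup Q]
    [ContinuousSMul 𝕜 Q] [T2Space Q] {u : Q} (hu : u ≠ 0)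
    (hdense : Dense ((𝕜 ∙ u : Submodule 𝕜 Q) : Set Q)) :
    ∃ ψ : Q →L[𝕜] 𝕜, ψ u = 1 := by
  have htop : (𝕜 ∙ u) = ⊤ := by
    rw [← (Submodule.closed_of_finiteDimensional (𝕜 ∙ u)).submodule_topologicalClosure_eq]
    exact Submodule.dense_iff_topologicalClosure_eq_top.mp hdense
  have : FiniteDimensional 𝕜 Q := Module.finite_def.mpr (htop ▸ Submodule.fg_span_singleton u)
  obtain ⟨f, hf⟩ := Module.Projective.exists_dual_eq_one 𝕜 hu
  exact ⟨⟨f, f.continuous_of_finiteDimensional⟩, hf⟩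

/-- The quotient of `X` by the closure `N` of `P (ker φ)` is Hausdorff, and the image of `P` in it
is the line through the class of `P v₀`, where `φ v₀ = 1`. Being dense and finite dimensional,
that line is the whole quotient, on which `φ` becomes a continuous coordinate. -/
theorem exists_continuousLinearMap_comp_eq_of_closure_image_ker_ne_univ
    {V X : Type*} [AddCommGroup V] [Module 𝕜 V] [AddCommGroup X] [Module 𝕜 X]
    [TopologicalSpace X] [IsTopologicalAddGroup X] [ContinuousSMul 𝕜 X]
    {P : V →ₗ[𝕜] X} (hP : DenseRange P) {φ : V →ₗ[𝕜] 𝕜}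
    (hφ : closure (P '' LinearMap.ker φ) ≠ Set.univ) :
    ∃ Λ : X →L[𝕜] 𝕜, ∀ v, Λ (P v) = φ v := by
  set N := ((LinearMap.ker φ).map P).topologicalClosure
  have hN : (N : Set X) = closure (P '' LinearMap.ker φ) := by
    rw [Submodule.topologicalClosure_coe, Submodule.map_coe]
  have hNclosed : IsClosed (N : Set X) := Submodule.isClosed_topologicalClosure _
  obtain ⟨v₀, hv₀⟩ : ∃ v₀, φ v₀ = 1 := by
    rcases LinearMap.surjective_or_eq_zero φ with hsurj | rfl
    · exact hsurj 1
    · simp [hP.closure_range] at hφ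
  set u := N.mkQ (P v₀)
  have hmk : ∀ v, N.mkQ (P v) = φ v • u := fun v => by
    rw [← map_smul, ← map_smul, ← sub_eq_zero, ← map_sub, ← map_sub, Submodule.mkQ_apply,
      Submodule.Quotient.mk_eq_zero]
    refine Submodule.le_topologicalClosure _ (Submodule.mem_map_of_mem ?_)
    simp [hv₀]
  have hu : u ≠ 0 := by
    intro hu0
    have hPN : Set.range P ⊆ N := by
      rintro _ ⟨v, rfl⟩
      show P v ∈ N
      rw [← Submodule.Quotient.mk_eq_zero, ← Submodule.mkQ_apply, hmk, hu0, smul_zero]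
    apply hφ
    rw [← hN, ← hNclosed.closure_eq]
    exact (Dense.mono hPN hP).closure_eq
  have hdense : Dense ((𝕜 ∙ u : Submodule 𝕜 (X ⧸ N)) : Set (X ⧸ N)) := by
    refine Dense.mono ?_
      ((N.mkQ_surjective.denseRange).comp hP N.isOpenQuotientMap_mkQ.continuous)
    rintro _ ⟨v, rfl⟩
    change N.mkQ (P v) ∈ _
    rw [hmk]
    exact Submodule.smul_mem _ _ (Submodule.mem_span_singleton_self u)
  obtain ⟨ψ, hψ⟩ := exists_continuousLinearMap_apply_eq_one_of_dense_span_singleton hu hdense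
  refine ⟨ψ.comp N.mkQL, fun v => ?_⟩
  rw [ContinuousLinearMap.comp_apply, Submodule.mkQL_apply, hmk, map_smul, hψ, smul_eq_mul,
    mul_one]

end DenseExtension

namespace HoloFunSpace1

variable {Ω : Set ℂ} {X : Type*} [AddCommGroup X] [Module ℂ X] [TopologicalSpace X]
  (H : HoloFunSpace1 Ω X)

theorem mul_apply_poly (p q : Polynomial ℂ) : H.mul p (H.poly q) = H.poly (p * q) :=
  H.inj _ _ fun z hz => by
    rw [H.mul_eval p _ z hz, H.poly_eval q z hz, H.poly_eval (p * q) z hz, Polynomial.eval_mul]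

theorem not_cyclic_poly_of_mem_maxDomain {w : ℂ} (hw : w ∈ H.maxDomain) {p : Polynomial ℂ}
    (hp : p.eval w = 0) : ¬ H.Cyclic (H.poly p) := by
  obtain ⟨Λ, hΛ⟩ := hw
  intro hcyc
  have hker : H.invSub (H.poly p) ⊆ LinearMap.ker (Λ : X →ₗ[ℂ] ℂ) := by
    refine closure_minimal ?_ (isClosed_eq Λ.continuous continuous_const)
    rintro _ ⟨q, rfl⟩
    simp [H.mul_apply_poly, hΛ, hp]
  have h1 : Λ (H.poly 1) = 0 := hker (hcyc ▸ Set.mem_univ _)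
  rw [hΛ, Polynomial.eval_one] at h1
  exact one_ne_zero h1

theorem invSub_poly_X_sub_C (w : ℂ) :
    H.invSub (H.poly (Polynomial.X - Polynomial.C w)) =
      closure (H.poly '' LinearMap.ker (Polynomial.leval w)) := by
  rw [invSub]
  congr 1
  ext F
  simp only [Set.mem_range, Set.mem_image, SetLike.mem_coe, LinearMap.mem_ker,
    Polynomial.leval_apply, H.mul_apply_poly]
  constructor
  · rintro ⟨q, rfl⟩
    exact ⟨_, by simp, rfl⟩
  · rintro ⟨p, hp, rfl⟩
    obtain ⟨q, rfl⟩ := Polynomial.dvd_iff_isRoot.mpr hp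
    exact ⟨q, by rw [mul_comm]⟩

theorem mem_maxDomain_of_not_cyclic [IsTopologicalAddGroup X] [ContinuousSMul ℂ X] {w : ℂ}
    (hw : ¬ H.Cyclic (H.poly (Polynomial.X - Polynomial.C w))) : w ∈ H.maxDomain := by
  rw [Cyclic, invSub_poly_X_sub_C] at hw
  exact exists_continuousLinearMap_comp_eq_of_closure_image_ker_ne_univ H.dense_poly hw

theorem mem_maxDomain_iff_not_cyclic [IsTopologicalAddGroup X] [ContinuousSMul ℂ X] {w : ℂ} :
    w ∈ H.maxDomain ↔ ¬ H.Cyclic (H.poly (Polynomial.X - Polynomial.C w)) :=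
  ⟨fun hw => H.not_cyclic_poly_of_mem_maxDomain hw (by simp), H.mem_maxDomain_of_not_cyclic⟩

end HoloFunSpace1

open HoloFunSpace1 in
theorem maxDomain_eq_not_cyclic_eq_envDomain_general
    {Ω : Set ℂ} {X : Type*}
    [AddCommGroup X] [Module ℂ X] [TopologicalSpace X]
    [IsTopologicalAddGroup X] [ContinuousSMul ℂ X]
    (H : HoloFunSpace1 Ω X) :
    H.maxDomain = {w : ℂ | ¬ H.Cyclic (H.poly (Polynomial.X - Polynomial.C w))} ∧
      H.maxDomain =
        {w : ℂ | ∀ p : Polynomial ℂ, H.Cyclic (H.poly p) → Polynomial.eval w p ≠ 0} := by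
  refine ⟨Set.ext fun w => H.mem_maxDomain_iff_not_cyclic, Set.ext fun w => ⟨?_, ?_⟩⟩
  · exact fun hw p hcyc hp => H.not_cyclic_poly_of_mem_maxDomain hw hp hcyc
  · exact fun hw => H.mem_maxDomain_iff_not_cyclic.mpr fun hcyc => hw _ hcyc (by simp)

open HoloFunSpace1 in
/-- In one variable,
`Ω_max = {w ∈ ℂ : z - w is not cyclic} = Ω_env`. -/
theorem maxDomain_eq_not_cyclic_eq_envDomain
    {Ω : Set ℂ} {X : Type*}
    [AddCommGroup X] [Module ℂ X] [TopologicalSpace X]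
    [IsTopologicalAddGroup X] [ContinuousSMul ℂ X] [T2Space X]
    (hΩ : IsOpen Ω) (H : HoloFunSpace1 Ω X) :
    H.maxDomain = {w : ℂ | ¬ H.Cyclic (H.poly (Polynomial.X - Polynomial.C w))} ∧
      H.maxDomain =
        {w : ℂ | ∀ p : Polynomial ℂ, H.Cyclic (H.poly p) → Polynomial.eval w p ≠ 0} :=
  maxDomain_eq_not_cyclic_eq_envDomain_general H
end

section
/- Let Ω ⊆ ℂ be open (one complex variable) and let 𝒳 be a Hausdorff topological vector space of holomorphic functions on Ω satisfying (P1)–(P3). A family of polynomials ℱ ⊆ 𝒫_1 is jointly cyclic in 𝒳 if and only if V(ℱ) ∩ Ω_max = ∅, where V(ℱ) = {w ∈ ℂ : P(w) = 0 for all P ∈ ℱ}. -/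
/-!
Let `w ∉ Ω_max` and let `M` be the closed invariant subspace generated by `z - w`. If `1 ∉ M`,
then, since every polynomial `p` is congruent to `p(w)` modulo `z - w`, the Hausdorff quotient
`X ⧸ M` is the line spanned by the class of `1`; the coordinate along that line is a continuous
extension of evaluation at `w`, which is absurd. So `z - w` is cyclic, and hence so is every
polynomial whose roots avoid `Ω_max`, being a unit times a product of such linear factors.
The generator `g` of the ideal spanned by `ℱ` lies in `S[ℱ]` and vanishes exactly on `V(ℱ)`,
which gives joint cyclicity when `V(ℱ) ∩ Ω_max = ∅`. Conversely, a continuous extension of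
evaluation at a point of `V(ℱ)` vanishes on `S[ℱ]` but not at `1`.
-/

namespace Submodule

variable {𝕜 E : Type*} [NontriviallyNormedField 𝕜] [CompleteSpace 𝕜] [AddCommGroup E]
  [Module 𝕜 E] [TopologicalSpace E] [IsTopologicalAddGroup E] [ContinuousSMul 𝕜 E]

theorem exists_continuousLinearMap_eq_one_of_dense_sup_span_singleton {M : Submodule 𝕜 E}
    (hM : IsClosed (M : Set E)) {e : E} (he : e ∉ M)
    (hdense : Dense ((M ⊔ 𝕜 ∙ e : Submodule 𝕜 E) : Set E)) :
    ∃ Λ : E →L[𝕜] 𝕜, Λ e = 1 ∧ ∀ x ∈ M, Λ x = 0 := by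
  have hle : M ⊔ 𝕜 ∙ e ≤ (𝕜 ∙ M.mkQ e).comap M.mkQ :=
    sup_le (M.le_comap_mkQ _) ((span_singleton_le_iff_mem _ _).mpr (mem_span_singleton_self _))
  have hclosed : IsClosed ((𝕜 ∙ M.mkQ e).comap M.mkQ : Set E) :=
    (closed_of_finiteDimensional (𝕜 ∙ M.mkQ e)).preimage M.continuous_mkQ
  have hmem (x : E) : M.mkQ x ∈ 𝕜 ∙ M.mkQ e :=
    hclosed.closure_subset_iff.mpr hle (hdense.closure_eq ▸ Set.mem_univ x)
  have hspan : (𝕜 ∙ M.mkQ e) = ⊤ := by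
    refine eq_top_iff'.mpr fun y => ?_
    obtain ⟨x, rfl⟩ := M.mkQ_surjective y
    exact hmem x
  have : FiniteDimensional 𝕜 (E ⧸ M) := ⟨⟨{M.mkQ e}, by simpa using hspan⟩⟩
  obtain ⟨φ, hφ⟩ :=
    Module.Projective.exists_dual_eq_one 𝕜 ((Quotient.mk_eq_zero M).not.mpr he)
  refine ⟨(LinearMap.toContinuousLinearMap φ).comp M.mkQL, hφ, fun x hx => ?_⟩
  simp [(Quotient.mk_eq_zero M).mpr hx]

end Submodule

namespace HoloFunSpace1

open Polynomial

variable {Ω : Set ℂ} {X : Type*} [AddCommGroup X] [Module ℂ X] [TopologicalSpace X]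
  (H : HoloFunSpace1 Ω X)

theorem mul_poly (p q : ℂ[X]) : H.mul p (H.poly q) = H.poly (p * q) :=
  H.inj _ _ fun z hz => by
    rw [H.mul_eval p _ z hz, H.poly_eval q z hz, H.poly_eval _ z hz, eval_mul]

theorem mul_mul (p q : ℂ[X]) (F : X) : H.mul p (H.mul q F) = H.mul (p * q) F :=
  H.inj _ _ fun z hz => by
    rw [H.mul_eval _ _ z hz, H.mul_eval _ _ z hz, H.mul_eval _ _ z hz, eval_mul, mul_assoc]

theorem subset_maxDomain : Ω ⊆ H.maxDomain := fun z hz =>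
  ⟨⟨LinearMap.proj z ∘ₗ H.toFun, H.eval_cont z hz⟩, fun p => H.poly_eval p z hz⟩

theorem mul_mem_invSub {F x : X} (r : ℂ[X]) (hx : x ∈ H.invSub F) :
    H.mul r x ∈ H.invSub F :=
  map_mem_closure (H.mul r).continuous hx <| by
    rintro _ ⟨q, rfl⟩
    exact ⟨r * q, (H.mul_mul r q F).symm⟩

theorem mul_mem_invSub_mul {F x : X} (r : ℂ[X]) (hx : x ∈ H.invSub F) :
    H.mul r x ∈ H.invSub (H.mul r F) :=
  map_mem_closure (H.mul r).continuous hx <| by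
    rintro _ ⟨q, rfl⟩
    exact ⟨q, (H.mul_mul q r F).trans (by rw [mul_comm, H.mul_mul])⟩

theorem invSub_subset_of_mem {F G : X} (hG : G ∈ H.invSub F) : H.invSub G ⊆ H.invSub F :=
  closure_minimal (Set.range_subset_iff.mpr fun r => H.mul_mem_invSub r hG) isClosed_closure

theorem cyclic_poly_one : H.Cyclic (H.poly 1) := by
  simpa only [Cyclic, invSub, mul_poly, mul_one] using H.dense_poly.closure_eq

theorem cyclic_of_poly_one_mem {F : X} (h : H.poly 1 ∈ H.invSub F) : H.Cyclic F :=
  Set.eq_univ_of_univ_subset (H.cyclic_poly_one ▸ H.invSub_subset_of_mem h)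

theorem cyclic_poly_of_isUnit {u : ℂ[X]} (hu : IsUnit u) : H.Cyclic (H.poly u) := by
  obtain ⟨v, hv⟩ := hu.exists_left_inv
  exact H.cyclic_of_poly_one_mem (subset_closure ⟨v, (H.mul_poly v u).trans (by rw [hv])⟩)

theorem cyclic_poly_mul {p q : ℂ[X]} (hp : H.Cyclic (H.poly p)) (hq : H.Cyclic (H.poly q)) :
    H.Cyclic (H.poly (p * q)) := by
  have hpq : H.poly p ∈ H.invSub (H.poly (p * q)) := by
    have h1 : H.poly 1 ∈ H.invSub (H.poly q) := hq ▸ Set.mem_univ _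
    simpa only [mul_poly, mul_one] using H.mul_mem_invSub_mul p h1
  exact H.cyclic_of_poly_one_mem (H.invSub_subset_of_mem hpq (hp ▸ Set.mem_univ _))


theorem cyclic_poly_X_sub_C [IsTopologicalAddGroup X] [ContinuousSMul ℂ X] {w : ℂ}
    (hw : w ∉ H.maxDomain) : H.Cyclic (H.poly (Polynomial.X - C w)) := by
  set N := LinearMap.range (H.poly ∘ₗ LinearMap.mulRight ℂ (Polynomial.X - C w))
  set M := N.topologicalClosure
  have hM : (M : Set X) = H.invSub (H.poly (Polynomial.X - C w)) := by
    simp only [M, N, Submodule.topologicalClosure_coe, LinearMap.coe_range, invSub, mul_poly]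
    rfl
  have hcongr (p : ℂ[X]) : H.poly p - eval w p • H.poly 1 ∈ M := by
    obtain ⟨q, hq⟩ := X_sub_C_dvd_sub_C_eval (a := w) (p := p)
    refine N.le_topologicalClosure ⟨q, ?_⟩
    rw [LinearMap.comp_apply, LinearMap.mulRight_apply, mul_comm, ← hq, map_sub, ← map_smul,
      smul_eq_C_mul, mul_one]
  have hdense : Dense ((M ⊔ ℂ ∙ H.poly 1 : Submodule ℂ X) : Set X) := by
    refine H.dense_poly.mono ?_
    rintro _ ⟨p, rfl⟩
    exact Submodule.mem_sup.mpr ⟨_, hcongr p, _,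
      Submodule.smul_mem _ _ (Submodule.mem_span_singleton_self _), sub_add_cancel _ _⟩
  refine H.cyclic_of_poly_one_mem (hM ▸ ?_)
  by_contra h1
  obtain ⟨Λ, hΛ1, hΛM⟩ :=
    Submodule.exists_continuousLinearMap_eq_one_of_dense_sup_span_singleton
      (hM ▸ isClosed_closure) h1 hdense
  exact hw ⟨Λ, fun p => by simpa [sub_eq_zero, hΛ1] using hΛM _ (hcongr p)⟩

theorem cyclic_poly_of_forall_isRoot_notMem [IsTopologicalAddGroup X] [ContinuousSMul ℂ X]
    {g : ℂ[X]} (hg : ∀ w, g.IsRoot w → w ∉ H.maxDomain) : H.Cyclic (H.poly g) := by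
  rcases eq_or_ne g 0 with rfl | hg0
  · -- every point is a root of `0`, so `Ω ⊆ Ω_max = ∅` and `X` is trivial
    have : Subsingleton X :=
      ⟨fun F G => H.inj F G fun z hz => absurd (H.subset_maxDomain hz) (hg z (by simp))⟩
    refine H.cyclic_of_poly_one_mem ?_
    rw [Subsingleton.elim (H.poly 1) (H.mul 1 (H.poly 0))]
    exact subset_closure ⟨1, rfl⟩
  rw [← C_leadingCoeff_mul_prod_multiset_X_sub_C (p := g) IsAlgClosed.card_roots_eq_natDegree]
  refine H.cyclic_poly_mul
    (H.cyclic_poly_of_isUnit (isUnit_C.mpr (leadingCoeff_ne_zero.mpr hg0).isUnit)) ?_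
  refine Multiset.prod_induction (fun p => H.Cyclic (H.poly p)) _
    (fun _ _ => H.cyclic_poly_mul) H.cyclic_poly_one ?_
  simp only [Multiset.mem_map, mem_roots hg0]
  rintro _ ⟨w, hw, rfl⟩
  exact H.cyclic_poly_X_sub_C (hg w hw)

theorem span_invSub_le_comap_mul (𝓕 : Set X) (r : ℂ[X]) :
    Submodule.span ℂ (⋃ F ∈ 𝓕, H.invSub F) ≤
      (Submodule.span ℂ (⋃ F ∈ 𝓕, H.invSub F)).comap (H.mul r).toLinearMap :=
  Submodule.span_le.mpr <| Set.iUnion₂_subset fun _ hF _ hy =>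
    Submodule.subset_span (Set.mem_biUnion hF (H.mul_mem_invSub r hy))

theorem mul_mem_jointInvSub {𝓕 : Set X} {x : X} (r : ℂ[X]) (hx : x ∈ H.jointInvSub 𝓕) :
    H.mul r x ∈ H.jointInvSub 𝓕 :=
  map_mem_closure (H.mul r).continuous hx fun _ hy => H.span_invSub_le_comap_mul 𝓕 r hy

theorem jointInvSub_subset {𝓕 : Set X} {N : Submodule ℂ X} (hN : IsClosed (N : Set X))
    (h : ∀ F ∈ 𝓕, ∀ q, H.mul q F ∈ N) : H.jointInvSub 𝓕 ⊆ N :=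
  closure_minimal (Submodule.span_le.mpr <| Set.iUnion₂_subset fun F hF =>
    closure_minimal (Set.range_subset_iff.mpr (h F hF)) hN) hN

theorem jointlyCyclic_of_cyclic_mem {𝓕 : Set X} {G : X} (hG : G ∈ H.jointInvSub 𝓕)
    (hcyc : H.Cyclic G) : H.JointlyCyclic 𝓕 :=
  Set.eq_univ_of_univ_subset <| hcyc ▸ closure_minimal
    (Set.range_subset_iff.mpr fun r => H.mul_mem_jointInvSub r hG) isClosed_closure

theorem poly_mem_jointInvSub_of_mem_span {ℱ : Set ℂ[X]} {g : ℂ[X]}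
    (hg : g ∈ Ideal.span ℱ) :
    H.poly g ∈ H.jointInvSub (H.poly '' ℱ) := by
  refine subset_closure ?_
  induction hg using Submodule.span_induction with
  | mem p hp =>
    exact Submodule.subset_span (Set.mem_biUnion (Set.mem_image_of_mem _ hp)
      (subset_closure ⟨1, (H.mul_poly 1 p).trans (by rw [one_mul])⟩))
  | zero => simp
  | add p q _ _ hp hq => simpa using add_mem hp hq
  | smul a p _ hp =>
    rw [smul_eq_mul, ← mul_poly]
    exact H.span_invSub_le_comap_mul _ a hp

theorem notMem_maxDomain_of_jointlyCyclic {ℱ : Set ℂ[X]}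
    (hcyc : H.JointlyCyclic (H.poly '' ℱ)) {w : ℂ} (hw : ∀ p ∈ ℱ, eval w p = 0) :
    w ∉ H.maxDomain := by
  rintro ⟨Λ, hΛ⟩
  have hker : H.jointInvSub (H.poly '' ℱ) ⊆ Λ.ker := by
    refine H.jointInvSub_subset Λ.isClosed_ker ?_
    rintro _ ⟨p, hp, rfl⟩ q
    simp [mul_poly, hΛ, hw p hp]
  have h1 : Λ (H.poly 1) = 0 := hker (hcyc ▸ Set.mem_univ _)
  simp [hΛ] at h1

end HoloFunSpace1

open HoloFunSpace1 in
theorem jointlyCyclic_iff_vanishing_disjoint_maxDomain_general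
    {Ω : Set ℂ} {X : Type*}
    [AddCommGroup X] [Module ℂ X] [TopologicalSpace X]
    [IsTopologicalAddGroup X] [ContinuousSMul ℂ X]
    (H : HoloFunSpace1 Ω X) (ℱ : Set (Polynomial ℂ)) :
    H.JointlyCyclic (H.poly '' ℱ) ↔
      {w : ℂ | ∀ p ∈ ℱ, Polynomial.eval w p = 0} ∩ H.maxDomain = ∅ := by
  refine ⟨fun hcyc => Set.eq_empty_of_forall_notMem fun w ⟨hw, hmax⟩ =>
    H.notMem_maxDomain_of_jointlyCyclic hcyc hw hmax, fun hV => ?_⟩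
  have hg := Submodule.IsPrincipal.generator_mem (Ideal.span ℱ)
  refine H.jointlyCyclic_of_cyclic_mem (H.poly_mem_jointInvSub_of_mem_span hg)
    (H.cyclic_poly_of_forall_isRoot_notMem fun w hw hmax => ?_)
  refine Set.eq_empty_iff_forall_notMem.mp hV w ⟨fun p hp => ?_, hmax⟩
  obtain ⟨q, rfl⟩ := (Submodule.IsPrincipal.mem_iff_generator_dvd _).mp (Ideal.subset_span hp)
  rw [Polynomial.eval_mul, hw.eq_zero, zero_mul]

open HoloFunSpace1 in
/-- In one variable, a family of polynomials `ℱ ⊆ 𝒫_1` is jointly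
cyclic if and only if `V(ℱ) ∩ Ω_max = ∅`, where `V(ℱ)` is the common vanishing set. -/
theorem jointlyCyclic_iff_vanishing_disjoint_maxDomain
    {Ω : Set ℂ} {X : Type*}
    [AddCommGroup X] [Module ℂ X] [TopologicalSpace X]
    [IsTopologicalAddGroup X] [ContinuousSMul ℂ X] [T2Space X]
    (hΩ : IsOpen Ω) (H : HoloFunSpace1 Ω X) (ℱ : Set (Polynomial ℂ)) :
    H.JointlyCyclic (H.poly '' ℱ) ↔
      {w : ℂ | ∀ p ∈ ℱ, Polynomial.eval w p = 0} ∩ H.maxDomain = ∅ :=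
  jointlyCyclic_iff_vanishing_disjoint_maxDomain_general H ℱ
end

section
/- Let Ω ⊆ ℂ^d be open and let 𝒳 be a metrizable topological vector space of holomorphic functions on Ω satisfying (P1)–(P3). Then the maximal domain Ω_max is an F_σ subset of ℂ^d, i.e., a countable union of closed sets. -/
/-!
If evaluation at `w` extends to a continuous functional `Λ`, then `|P(w)| ≤ 1` for all
polynomials `P` in some ball `dist P 0 ≤ 1 / (n + 1)`. Conversely, if `|P(w)| ≤ n + 1` on such a
ball, then `P ↦ P(w)` vanishes on the polynomials that are `0` in `X` (rescale them), so it is a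
linear functional on the dense subspace of polynomials that is bounded on a neighbourhood of `0`,
hence continuous. Translation invariance makes the metric uniformity a group uniformity, so the
functional extends by continuity to `X`. Thus `Ω_max` is the union over `n` of the sets cut out by
the conditions `|P(w)| ≤ n + 1`, each of which is closed.
-/

open Filter Topology Metric

theorem isUniformAddGroup_of_dist_add_left {X : Type*} [AddCommGroup X] [PseudoMetricSpace X]
    (hdist : ∀ a x y : X, dist (a + x) (a + y) = dist x y) : IsUniformAddGroup X := by
  have dist_sub_right (x y z : X) : dist (x - z) (y - z) = dist x y := by
    simpa only [sub_eq_neg_add] using hdist (-z) x y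
  have dist_neg (x y : X) : dist (-x) (-y) = dist x y := by
    simpa only [add_neg_cancel_right, add_neg_cancel_comm, dist_comm] using
      (hdist (y + x) (-x) (-y)).symm
  refine ⟨uniformContinuous_iff.2 fun ε hε => ⟨ε / 2, half_pos hε, fun {p q} hpq => ?_⟩⟩
  rw [Prod.dist_eq, max_lt_iff] at hpq
  calc dist (p.1 - p.2) (q.1 - q.2)
      ≤ dist (p.1 - p.2) (q.1 - p.2) + dist (q.1 - p.2) (q.1 - q.2) := dist_triangle _ _ _
    _ = dist p.1 q.1 + dist p.2 q.2 := by
      rw [dist_sub_right, sub_eq_add_neg, sub_eq_add_neg, hdist, dist_neg]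
    _ < ε := by linarith [hpq.1, hpq.2]

theorem eq_zero_of_forall_norm_smul_le {𝕜 F : Type*} [NontriviallyNormedField 𝕜]
    [NormedAddCommGroup F] [NormedSpace 𝕜 F] {y : F} {C : ℝ} (h : ∀ c : 𝕜, ‖c • y‖ ≤ C) :
    y = 0 := by
  by_contra hy
  have hy' : 0 < ‖y‖ := norm_pos_iff.2 hy
  obtain ⟨c, hc⟩ := NormedField.exists_lt_norm 𝕜 (C / ‖y‖)
  have hcy := h c
  rw [norm_smul] at hcy
  rw [div_lt_iff₀ hy'] at hc
  linarith

theorem LinearMap.continuous_of_norm_le_on_nhds_zero {𝕜 E F : Type*} [NontriviallyNormedField 𝕜]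
    [AddCommGroup E] [Module 𝕜 E] [TopologicalSpace E] [IsTopologicalAddGroup E]
    [ContinuousConstSMul 𝕜 E] [SeminormedAddCommGroup F] [NormedSpace 𝕜 F] (f : E →ₗ[𝕜] F)
    {U : Set E} (hU : U ∈ 𝓝 0) {C : ℝ} (hf : ∀ x ∈ U, ‖f x‖ ≤ C) : Continuous f := by
  let p : Seminorm 𝕜 E := (normSeminorm 𝕜 F).comp f
  have hp : Tendsto p (𝓝 0) (𝓝 0) := map_zero p ▸
    Seminorm.continuousAt_zero' (r := C)
      (mem_of_superset hU fun x hx => by simpa [p] using hf x hx)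
  refine continuous_of_continuousAt_zero f.toAddMonoidHom ?_
  rw [ContinuousAt, map_zero, tendsto_zero_iff_norm_tendsto_zero]
  exact hp

theorem exists_continuousLinearMap_comp_eq_of_norm_le {𝕜 V X F : Type*}
    [NontriviallyNormedField 𝕜] [AddCommGroup V] [Module 𝕜 V]
    [AddCommGroup X] [Module 𝕜 X] [UniformSpace X] [IsUniformAddGroup X] [ContinuousSMul 𝕜 X]
    [NormedAddCommGroup F] [NormedSpace 𝕜 F] [CompleteSpace F]
    (φ : V →ₗ[𝕜] X) (hφ : DenseRange φ) (ψ : V →ₗ[𝕜] F) {U : Set X} (hU : U ∈ 𝓝 0) {C : ℝ}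
    (hψ : ∀ v, φ v ∈ U → ‖ψ v‖ ≤ C) : ∃ Λ : X →L[𝕜] F, ∀ v, Λ (φ v) = ψ v := by
  have hker : LinearMap.ker φ ≤ LinearMap.ker ψ := fun v hv =>
    eq_zero_of_forall_norm_smul_le (C := C) fun c => by
      rw [← map_smul]
      refine hψ _ ?_
      rw [map_smul, LinearMap.mem_ker.1 hv, smul_zero]
      exact mem_of_mem_nhds hU
  let Λ₀ : LinearMap.range φ →ₗ[𝕜] F :=
    (LinearMap.ker φ).liftQ ψ hker ∘ₗ φ.quotKerEquivRange.symm.toLinearMap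
  have hΛ₀ (v : V) : Λ₀ ⟨φ v, LinearMap.mem_range_self φ v⟩ = ψ v := by
    simp [Λ₀, LinearMap.quotKerEquivRange_symm_apply_image]
  have : IsUniformAddGroup (LinearMap.range φ) := .comap (LinearMap.range φ).subtype
  have hcont : Continuous Λ₀ := by
    refine Λ₀.continuous_of_norm_le_on_nhds_zero (C := C)
      (continuous_subtype_val.continuousAt.preimage_mem_nhds hU) ?_
    rintro ⟨_, v, rfl⟩ hv
    exact (hΛ₀ v).symm ▸ hψ v hv
  refine ⟨(⟨Λ₀, hcont⟩ : LinearMap.range φ →L[𝕜] F).extend (LinearMap.range φ).subtypeL,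
    fun v => ?_⟩
  have hdense : DenseRange (LinearMap.range φ).subtypeL := by
    rw [DenseRange, Submodule.coe_subtypeL, Submodule.coe_subtype, Subtype.range_coe,
      LinearMap.coe_range]
    exact hφ
  exact (ContinuousLinearMap.extend_eq _ hdense isUniformEmbedding_subtype_val.isUniformInducing
    ⟨φ v, LinearMap.mem_range_self φ v⟩).trans (hΛ₀ v)

namespace HoloFunSpace

variable {d : ℕ} {Ω : Set (Fin d → ℂ)} {X : Type*} [AddCommGroup X] [Module ℂ X]
  [PseudoMetricSpace X]

def evalBoundedLevel (H : HoloFunSpace d Ω X) (n : ℕ) : Set (Fin d → ℂ) :=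
  {w | ∀ P, H.poly P ∈ closedBall 0 (1 / ((n : ℝ) + 1)) → ‖MvPolynomial.eval w P‖ ≤ n + 1}

theorem isClosed_evalBoundedLevel (H : HoloFunSpace d Ω X) (n : ℕ) :
    IsClosed (H.evalBoundedLevel n) := by
  simp only [evalBoundedLevel, Set.ofPred_forall]
  exact isClosed_iInter fun P => isClosed_iInter fun _ =>
    isClosed_le (MvPolynomial.continuous_eval P).norm continuous_const

theorem maxDomain_eq_iUnion_evalBoundedLevel [IsUniformAddGroup X] [ContinuousSMul ℂ X]
    (H : HoloFunSpace d Ω X) : H.maxDomain = ⋃ n, H.evalBoundedLevel n := by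
  ext w
  rw [Set.mem_iUnion]
  constructor
  · rintro ⟨Λ, hΛ⟩
    have hU : Λ ⁻¹' closedBall 0 1 ∈ 𝓝 0 :=
      Λ.continuous.tendsto' 0 0 (map_zero Λ) (closedBall_mem_nhds 0 one_pos)
    obtain ⟨n, -, hn⟩ := nhds_basis_closedBall_inv_nat_succ.mem_iff.1 hU
    refine ⟨n, fun P hP => ?_⟩
    have hΛP := hn hP
    rw [Set.mem_preimage, mem_closedBall_zero_iff, hΛ] at hΛP
    linarith [(n.cast_nonneg : (0 : ℝ) ≤ n)]
  · rintro ⟨n, hn⟩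
    exact exists_continuousLinearMap_comp_eq_of_norm_le H.poly H.dense_poly
      (MvPolynomial.aeval w).toLinearMap (closedBall_mem_nhds 0 Nat.one_div_pos_of_nat) hn

end HoloFunSpace

open HoloFunSpace in
theorem maxDomain_isFSigma_general
    {d : ℕ} {Ω : Set (Fin d → ℂ)} {X : Type*}
    [AddCommGroup X] [Module ℂ X] [MetricSpace X]
    [ContinuousSMul ℂ X]
    (hdist : ∀ a x y : X, dist (a + x) (a + y) = dist x y)
    (H : HoloFunSpace d Ω X) :
    ∃ C : ℕ → Set (Fin d → ℂ), (∀ n, IsClosed (C n)) ∧ H.maxDomain = ⋃ n, C n := by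
  have := isUniformAddGroup_of_dist_add_left hdist
  exact ⟨H.evalBoundedLevel, H.isClosed_evalBoundedLevel, H.maxDomain_eq_iUnion_evalBoundedLevel⟩

open HoloFunSpace in
/-- If `X` is a (Hausdorff) topological vector space of holomorphic
functions on an open `Ω ⊆ ℂ^d` satisfying (P1)-(P3) whose topology is induced by a
translation-invariant metric, then `Ω_max` is an `F_σ` subset of `ℂ^d`. -/
theorem maxDomain_isFSigma
    {d : ℕ} {Ω : Set (Fin d → ℂ)} {X : Type*}
    [AddCommGroup X] [Module ℂ X] [MetricSpace X]
    [IsTopologicalAddGroup X] [ContinuousSMul ℂ X]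
    (hdist : ∀ a x y : X, dist (a + x) (a + y) = dist x y)
    (hΩ : IsOpen Ω) (H : HoloFunSpace d Ω X) :
    ∃ C : ℕ → Set (Fin d → ℂ), (∀ n, IsClosed (C n)) ∧ H.maxDomain = ⋃ n, C n :=
  maxDomain_isFSigma_general hdist H
end

section
/- Let Γ ⊆ 𝕋 be a closed subset of the unit circle, and let v(z) = exp(−dist(z/|z|, Γ)/(1 − |z|)) for z ∈ 𝔻 \ {0}. Then there exists a constant C > 0 such that for every w ∈ 𝕋 \ Γ, ∫_𝔻 |z − w|^{−6} v(z) dA(z) ≤ C · dist(w, Γ)^{−6}; in particular, the function z ↦ 1/(z − w)³ has finite norm in L²_a(𝔻, v) for every w ∈ 𝕋 \ Γ. -/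
open Metric MeasureTheory

/-- The normalized area measure `dA = dx dy / π` on `ℂ`. -/
noncomputable def dA : Measure ℂ := (ENNReal.ofReal Real.pi)⁻¹ • volume

/-- The weight `v(z) = exp(−dist(z/|z|, Γ)/(1 − |z|))` associated with a closed set
`Γ ⊆ 𝕋`. -/
noncomputable def weightGamma (Γ : Set ℂ) (z : ℂ) : ℝ :=
  Real.exp (-(Metric.infDist (z / (‖z‖ : ℂ)) Γ) / (1 - ‖z‖))

/-! The point `z / |z|` lies within `2 |z - w|` of `w`, and `1 - |z| ≤ |z - w|`, so with
`d = dist(w, Γ)` the weight satisfies `v(z) ≤ exp(2 - d / |z - w|)`. As `exp(-t) ≤ n! / tⁿ`,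
the integrand `|z - w|⁻⁶ v(z)` is bounded by `e² 6! / d⁶` on all of `𝔻`, which has `dA`-measure 1. -/

open Nat in
theorem Real.exp_neg_le_factorial_div_pow {x : ℝ} (hx : 0 < x) (n : ℕ) :
    Real.exp (-x) ≤ n ! / x ^ n := by
  rw [Real.exp_neg, inv_le_comm₀ (Real.exp_pos x) (by positivity), inv_div]
  exact Real.pow_div_factorial_le_exp x hx.le n

theorem dA_ball (a : ℂ) (r : ℝ) : dA (ball a r) = ENNReal.ofReal r ^ 2 := by
  rw [dA, Measure.smul_apply, Complex.volume_ball, smul_eq_mul, ← ENNReal.ofReal_coe_nnreal,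
    NNReal.coe_real_pi, mul_comm, mul_assoc, ENNReal.mul_inv_cancel, mul_one]
  · simpa using Real.pi_pos
  · simp

@[fun_prop]
theorem measurable_weightGamma (Γ : Set ℂ) : Measurable (weightGamma Γ) := by
  unfold weightGamma; fun_prop

theorem dist_div_norm_self_le {z : ℂ} (hz : ‖z‖ ≤ 1) : dist (z / ‖z‖) z ≤ 1 - ‖z‖ := by
  rcases eq_or_ne z 0 with rfl | hz0
  · simp
  have hz_pos : 0 < ‖z‖ := norm_pos_iff.2 hz0
  have : z / ‖z‖ - z = ((‖z‖⁻¹ - 1 : ℝ) : ℂ) * z := by push_cast; field_simp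
  rw [dist_eq_norm, this, norm_mul, Complex.norm_real, Real.norm_of_nonneg, sub_mul,
    inv_mul_cancel₀ hz_pos.ne', one_mul]
  exact sub_nonneg.2 ((one_le_inv₀ hz_pos).2 hz)

theorem one_sub_norm_le_norm_sub {z w : ℂ} (hw : ‖w‖ = 1) : 1 - ‖z‖ ≤ ‖z - w‖ := by
  simpa [hw, norm_sub_rev] using norm_sub_norm_le w z

theorem dist_div_norm_le_two_mul {z w : ℂ} (hw : ‖w‖ = 1) (hz : ‖z‖ ≤ 1) :
    dist (z / ‖z‖) w ≤ 2 * ‖z - w‖ := by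
  have h := one_sub_norm_le_norm_sub (z := z) hw
  calc dist (z / ‖z‖) w ≤ dist (z / ‖z‖) z + dist z w := dist_triangle _ _ _
    _ ≤ (1 - ‖z‖) + ‖z - w‖ := by rw [dist_eq_norm z]; gcongr; exact dist_div_norm_self_le hz
    _ ≤ 2 * ‖z - w‖ := by linarith

theorem weightGamma_le_exp (Γ : Set ℂ) {z w : ℂ} (hw : ‖w‖ = 1) (hz : ‖z‖ < 1) :
    weightGamma Γ z ≤ Real.exp (2 - infDist w Γ / ‖z - w‖) := by
  set D := infDist (z / ‖z‖) Γ
  have hD : infDist w Γ - D ≤ 2 * ‖z - w‖ := by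
    have := infDist_le_infDist_add_dist (x := w) (y := z / ‖z‖) (s := Γ)
    rw [dist_comm] at this
    linarith [dist_div_norm_le_two_mul hw hz.le]
  have hs := one_sub_norm_le_norm_sub (z := z) hw
  rw [weightGamma, Real.exp_le_exp, neg_div]
  calc -(D / (1 - ‖z‖)) ≤ -(D / ‖z - w‖) := by
        gcongr
        exact infDist_nonneg
    _ ≤ 2 - infDist w Γ / ‖z - w‖ := by
        have : (infDist w Γ - D) / ‖z - w‖ ≤ 2 := div_le_of_le_mul₀ (norm_nonneg _) zero_le_two hD
        rw [sub_div] at this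
        linarith

open Nat in
theorem div_norm_sub_pow_mul_weightGamma_le (Γ : Set ℂ) {z w : ℂ} (hw : ‖w‖ = 1) (hz : ‖z‖ < 1)
    (hd : 0 < infDist w Γ) (n : ℕ) :
    1 / ‖z - w‖ ^ n * weightGamma Γ z ≤ Real.exp 2 * n ! / infDist w Γ ^ n := by
  have hr : 0 < ‖z - w‖ := norm_sub_pos_iff.2 fun h => by simp [h, hw] at hz
  calc 1 / ‖z - w‖ ^ n * weightGamma Γ z
      ≤ 1 / ‖z - w‖ ^ n * (Real.exp 2 * Real.exp (-(infDist w Γ / ‖z - w‖))) := by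
        rw [← Real.exp_add, ← sub_eq_add_neg]
        gcongr
        exact weightGamma_le_exp Γ hw hz
    _ ≤ 1 / ‖z - w‖ ^ n * (Real.exp 2 * (n ! / (infDist w Γ / ‖z - w‖) ^ n)) := by
        gcongr
        exact Real.exp_neg_le_factorial_div_pow (by positivity) n
    _ = Real.exp 2 * n ! / infDist w Γ ^ n := by
        rw [div_pow]
        field_simp

theorem weighted_integral_bound_general (Γ : Set ℂ)
    (hΓclosed : IsClosed Γ) (hΓne : Γ.Nonempty) :
    ∃ C > (0 : ℝ), ∀ w ∈ sphere (0 : ℂ) 1 \ Γ,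
      IntegrableOn (fun z => (1 / ‖z - w‖ ^ 6) * weightGamma Γ z) (ball (0 : ℂ) 1) dA ∧
      (∫ z in ball (0 : ℂ) 1, (1 / ‖z - w‖ ^ 6) * weightGamma Γ z ∂dA)
        ≤ C / Metric.infDist w Γ ^ 6 := by
  refine ⟨Real.exp 2 * Nat.factorial 6, by positivity, fun w ⟨hw, hwΓ⟩ => ?_⟩
  have hd : 0 < infDist w Γ := (hΓclosed.notMem_iff_infDist_pos hΓne).1 hwΓ
  have hfin : dA (ball (0 : ℂ) 1) < ⊤ := by simp [dA_ball]
  have hbound : ∀ z ∈ ball (0 : ℂ) 1,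
      ‖1 / ‖z - w‖ ^ 6 * weightGamma Γ z‖ ≤ Real.exp 2 * Nat.factorial 6 / infDist w Γ ^ 6 := by
    intro z hz
    rw [Real.norm_of_nonneg (by unfold weightGamma; positivity)]
    exact div_norm_sub_pow_mul_weightGamma_le Γ (by simpa using hw) (by simpa using hz) hd 6
  have hmeas : Measurable fun z => 1 / ‖z - w‖ ^ 6 * weightGamma Γ z := by fun_prop
  refine ⟨.of_bound hfin hmeas.aestronglyMeasurable _
    (ae_restrict_of_forall_mem measurableSet_ball hbound), ?_⟩
  simpa [dA_ball, measureReal_def] using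
    (le_abs_self _).trans (norm_setIntegral_le_of_norm_le_const hfin hbound)

/-- Let `Γ ⊆ 𝕋` be closed (and nonempty, as is implicit: for `Γ = ∅`
the distance to `Γ` is `+∞` and the weight degenerates) and let
`v(z) = exp(−dist(z/|z|, Γ)/(1 − |z|))`.  There is a constant `C > 0` such that for
every `w ∈ 𝕋 \ Γ`,
`∫_𝔻 |z − w|⁻⁶ v(z) dA(z) ≤ C ⋅ dist(w, Γ)⁻⁶`; in particular `z ↦ 1/(z−w)³` has
finite norm in `L²_a(𝔻, v)`, i.e. `|z − w|⁻⁶ v` is integrable on `𝔻`. -/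
theorem weighted_integral_bound (Γ : Set ℂ) (hΓ : Γ ⊆ sphere (0 : ℂ) 1)
    (hΓclosed : IsClosed Γ) (hΓne : Γ.Nonempty) :
    ∃ C > (0 : ℝ), ∀ w ∈ sphere (0 : ℂ) 1 \ Γ,
      IntegrableOn (fun z => (1 / ‖z - w‖ ^ 6) * weightGamma Γ z) (ball (0 : ℂ) 1) dA ∧
      (∫ z in ball (0 : ℂ) 1, (1 / ‖z - w‖ ^ 6) * weightGamma Γ z ∂dA)
        ≤ C / Metric.infDist w Γ ^ 6 :=
  weighted_integral_bound_general Γ hΓclosed hΓne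
end
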